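/- For every y ∈ ℝ^M and every λ > 0, the set of minimizers of problem (P) is nonempty and compact if and only if ker(Φ) ∩ ker(L*) = {0}. -/

import Mathlib

/-!
If `h ≠ 0` lies in `ker Φ ∩ ker L*`, the objective is constant along the lines `x + ℝ h`, so a
nonempty set of minimizers contains a whole line and cannot be compact. Conversely, when the
kernels meet trivially, `x ↦ ‖Φ x‖ + A (L* x)` is positively homogeneous and positive off `0`,
hence bounded below by `c ‖x‖`; this makes the objective coercive, and a continuous coercive
function on `ℝ^N` attains its minimum on a compact set.
-/

open RealInnerProductSpace

noncomputable section

abbrev Euc (n : ℕ) := EuclideanSpace ℝ (Fin n)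

def proj {n : ℕ} (V : Submodule ℝ (Euc n)) : Euc n →L[ℝ] Euc n :=
  V.subtypeL.comp (Submodule.orthogonalProjection V)

def dualNorm {n : ℕ} (A : Euc n → ℝ) (α : Euc n) : ℝ :=
  sSup {r : ℝ | ∃ v : Euc n, A v ≤ 1 ∧ r = ⟪α, v⟫}

def subdiff {n : ℕ} (f : Euc n → ℝ) (x : Euc n) : Set (Euc n) :=
  {g : Euc n | ∀ y : Euc n, f x + ⟪g, y - x⟫ ≤ f y}

def IsNorm {n : ℕ} (A : Euc n → ℝ) : Prop :=
  (∀ x, A x = 0 ↔ x = 0) ∧ (∀ (c : ℝ) (x : Euc n), A (c • x) = |c| * A x) ∧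
    (∀ x y, A (x + y) ≤ A x + A y)

def Decomposable {n : ℕ} (A : Euc n → ℝ) (u : Euc n) (T : Submodule ℝ (Euc n)) (e : Euc n) :
    Prop :=
  e ∈ T ∧
  subdiff A u = {α : Euc n | proj T α = e ∧ dualNorm A (proj Tᗮ α) ≤ 1} ∧
  ∀ z : Euc n, z ∈ Tᗮ →
    A z = sSup {r : ℝ | ∃ v ∈ (Tᗮ : Submodule ℝ (Euc n)), dualNorm A v ≤ 1 ∧ r = ⟪v, z⟫}

def obj {N M P : ℕ} (Φ : Euc N →L[ℝ] Euc M) (L : Euc P →L[ℝ] Euc N) (A : Euc P → ℝ)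
    (y : Euc M) (lam : ℝ) (x : Euc N) : ℝ :=
  (1/2) * ‖y - Φ x‖^2 + lam * A (ContinuousLinearMap.adjoint L x)

def SC {N M P : ℕ} (Φ : Euc N →L[ℝ] Euc M) (L : Euc P →L[ℝ] Euc N) (A : Euc P → ℝ)
    (x : Euc N) (η : Euc M) (α : Euc P) : Prop :=
  α ∈ subdiff A (ContinuousLinearMap.adjoint L x) ∧
  ContinuousLinearMap.adjoint Φ η = L α ∧
  L α ∈ subdiff (fun z => A (ContinuousLinearMap.adjoint L z)) x

def breg {n : ℕ} (A : Euc n → ℝ) (α u u₀ : Euc n) : ℝ :=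
  A u - A u₀ - ⟪α, u - u₀⟫

open Filter

lemma not_isCompact_of_forall_add_smul_mem {E : Type*} [NormedAddCommGroup E]
    [NormedSpace ℝ E] [FiniteDimensional ℝ E] {S : Set E} {x h : E} (hh : h ≠ 0)
    (hS : ∀ t : ℝ, x + t • h ∈ S) : ¬IsCompact S := by
  intro hcpt
  have hline : Topology.IsClosedEmbedding fun t : ℝ => x + t • h :=
    (Homeomorph.addLeft x).isClosedEmbedding.comp (isClosedEmbedding_smul_left hh)
  have hpre : (fun t : ℝ => x + t • h) ⁻¹' S = Set.univ := Set.eq_univ_of_forall hS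
  exact noncompact_univ ℝ (hpre ▸ hline.isCompact_preimage hcpt)

lemma exists_pos_mul_norm_le_of_homogeneous {E : Type*} [NormedAddCommGroup E]
    [NormedSpace ℝ E] [ProperSpace E] {g : E → ℝ} (hg : Continuous g)
    (hhom : ∀ (t : ℝ) (x : E), g (t • x) = |t| * g x) (hpos : ∀ x, x ≠ 0 → 0 < g x) :
    ∃ c > 0, ∀ x, c * ‖x‖ ≤ g x := by
  have hg0 : g 0 = 0 := by simpa using hhom 0 0
  rcases subsingleton_or_nontrivial E with hE | hE
  · exact ⟨1, one_pos, fun x => by simp [Subsingleton.elim x 0, hg0]⟩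
  obtain ⟨z, hz, hmin⟩ := (isCompact_sphere (0 : E) 1).exists_isMinOn
    (NormedSpace.sphere_nonempty.mpr zero_le_one) hg.continuousOn
  refine ⟨g z, hpos z (ne_zero_of_mem_unit_sphere ⟨z, hz⟩), fun x => ?_⟩
  rcases eq_or_ne x 0 with rfl | hx
  · simp [hg0]
  have hunit : ‖x‖⁻¹ • x ∈ Metric.sphere (0 : E) 1 := by
    simp [norm_smul, hx]
  calc g z * ‖x‖ ≤ g (‖x‖⁻¹ • x) * ‖x‖ := by gcongr; exact hmin hunit
    _ = g x := by
      rw [hhom, abs_inv, abs_norm]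
      field_simp [norm_ne_zero_iff.mpr hx]

section Coercive

variable {X : Type*} [TopologicalSpace X] {f : X → ℝ}

lemma isCompact_setOf_le_of_tendsto_cocompact (hf : Continuous f)
    (hlim : Tendsto f (cocompact X) atTop) (c : ℝ) : IsCompact {x | f x ≤ c} := by
  obtain ⟨K, hK, hsub⟩ := mem_cocompact'.mp (hlim.eventually_gt_atTop c)
  exact hK.of_isClosed_subset (isClosed_le hf continuous_const) fun x hx =>
    hsub (not_lt.mpr hx : ¬c < f x)

lemma nonempty_and_isCompact_setOf_forall_le [Nonempty X] (hf : Continuous f)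
    (hlim : Tendsto f (cocompact X) atTop) :
    {x | ∀ z, f x ≤ f z}.Nonempty ∧ IsCompact {x | ∀ z, f x ≤ f z} := by
  obtain ⟨x₀, hx₀⟩ := hf.exists_forall_le hlim
  refine ⟨⟨x₀, hx₀⟩, ?_⟩
  have hclosed : IsClosed {x | ∀ z, f x ≤ f z} := by
    simp only [Set.ofPred_forall]
    exact isClosed_iInter fun z => isClosed_le hf continuous_const
  exact (isCompact_setOf_le_of_tendsto_cocompact hf hlim (f x₀)).of_isClosed_subset hclosed
    fun x hx => hx x₀

end Coercive

namespace IsNorm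

variable {n : ℕ} {A : Euc n → ℝ}

lemma map_zero (hA : IsNorm A) : A 0 = 0 := (hA.1 0).mpr rfl

lemma nonneg (hA : IsNorm A) (x : Euc n) : 0 ≤ A x := by
  have h := hA.2.2 x ((-1 : ℝ) • x)
  rw [hA.2.1, neg_one_smul, add_neg_cancel, hA.map_zero, abs_neg, abs_one, one_mul] at h
  linarith

lemma convexOn (hA : IsNorm A) : ConvexOn ℝ Set.univ A :=
  ⟨convex_univ, fun x _ y _ a b ha hb _ => by
    simpa only [hA.2.1, abs_of_nonneg ha, abs_of_nonneg hb, smul_eq_mul] using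
      hA.2.2 (a • x) (b • y)⟩

lemma continuous (hA : IsNorm A) : Continuous A :=
  hA.convexOn.locallyLipschitz.continuous

end IsNorm

open ContinuousLinearMap

section Objective

variable {N M P : ℕ} (Φ : Euc N →L[ℝ] Euc M) (L : Euc P →L[ℝ] Euc N) {A : Euc P → ℝ}

lemma obj_add_smul_of_mem_ker (y : Euc M) (lam : ℝ) (x : Euc N) {h : Euc N} (hΦ : Φ h = 0)
    (hL : adjoint L h = 0) (t : ℝ) : obj Φ L A y lam (x + t • h) = obj Φ L A y lam x := by
  simp only [obj, map_add, map_smul, hΦ, hL, smul_zero, add_zero]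

lemma continuous_obj (hA : IsNorm A) (y : Euc M) (lam : ℝ) : Continuous (obj Φ L A y lam) := by
  have := hA.continuous
  unfold obj
  fun_prop

lemma exists_pos_mul_norm_le_norm_add (hA : IsNorm A)
    (hker : ∀ h : Euc N, Φ h = 0 → adjoint L h = 0 → h = 0) :
    ∃ c > 0, ∀ x, c * ‖x‖ ≤ ‖Φ x‖ + A (adjoint L x) := by
  refine exists_pos_mul_norm_le_of_homogeneous
    (Φ.continuous.norm.add (hA.continuous.comp (adjoint L).continuous)) (fun t x => ?_)
    (fun x hx => ?_)
  · simp only [map_smul, norm_smul, hA.2.1, Real.norm_eq_abs, mul_add]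
  · by_contra! hle
    have hΦ : ‖Φ x‖ = 0 := by linarith [norm_nonneg (Φ x), hA.nonneg (adjoint L x)]
    have hL : A (adjoint L x) = 0 := by linarith [norm_nonneg (Φ x), hA.nonneg (adjoint L x)]
    exact hx (hker x (norm_eq_zero.mp hΦ) ((hA.1 _).mp hL))

lemma min_one_mul_sub_le_obj (hA : IsNorm A) (y : Euc M) {lam : ℝ} (hlam : 0 < lam) (x : Euc N) :
    min 1 lam * (‖Φ x‖ + A (adjoint L x)) - (‖y‖ + 1 / 2) ≤ obj Φ L A y lam x := by
  have hres : ‖Φ x‖ - ‖y‖ ≤ ‖y - Φ x‖ := by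
    rw [norm_sub_rev]; exact norm_sub_norm_le _ _
  have hA0 := hA.nonneg (adjoint L x)
  have h1 : min 1 lam ≤ 1 := min_le_left _ _
  have hlam' : min 1 lam ≤ lam := min_le_right _ _
  have hm : 0 ≤ min 1 lam := le_min zero_le_one hlam.le
  unfold obj
  -- `a ^ 2 / 2 ≥ a - 1 / 2` trades the quadratic data term for a linear one
  nlinarith [sq_nonneg (‖y - Φ x‖ - 1), norm_nonneg (Φ x), mul_le_mul_of_nonneg_right hlam' hA0,
    mul_le_mul_of_nonneg_right h1 (norm_nonneg (Φ x))]

lemma tendsto_obj_cocompact (hA : IsNorm A) (y : Euc M) {lam : ℝ} (hlam : 0 < lam)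
    (hker : ∀ h : Euc N, Φ h = 0 → adjoint L h = 0 → h = 0) :
    Tendsto (obj Φ L A y lam) (cocompact (Euc N)) atTop := by
  obtain ⟨c, hc, hbound⟩ := exists_pos_mul_norm_le_norm_add Φ L hA hker
  have hm : 0 < min 1 lam := lt_min one_pos hlam
  refine tendsto_atTop_mono (fun x => ?_) (tendsto_atTop_add_const_right _ (-(‖y‖ + 1 / 2))
    (tendsto_norm_cocompact_atTop.const_mul_atTop (mul_pos hm hc)))
  have := mul_le_mul_of_nonneg_left (hbound x) hm.le
  linarith [min_one_mul_sub_le_obj Φ L hA y hlam x]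

end Objective

theorem stmt8 {N M P : ℕ} (Φ : Euc N →L[ℝ] Euc M) (L : Euc P →L[ℝ] Euc N)
    (A : Euc P → ℝ) (hA : IsNorm A) :
    ∀ (y : Euc M) (lam : ℝ), 0 < lam →
      (({x : Euc N | ∀ z, obj Φ L A y lam x ≤ obj Φ L A y lam z}.Nonempty ∧
        IsCompact {x : Euc N | ∀ z, obj Φ L A y lam x ≤ obj Φ L A y lam z}) ↔
       (∀ h : Euc N, Φ h = 0 → ContinuousLinearMap.adjoint L h = 0 → h = 0)) := by
  intro y lam hlam
  constructor
  · rintro ⟨⟨x, hx⟩, hcpt⟩ h hΦ hL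
    by_contra hh
    refine not_isCompact_of_forall_add_smul_mem (x := x) hh (fun t => ?_) hcpt
    intro z
    rw [obj_add_smul_of_mem_ker Φ L y lam x hΦ hL t]
    exact hx z
  · intro hker
    exact nonempty_and_isCompact_setOf_forall_le (continuous_obj Φ L hA y lam)
      (tendsto_obj_cocompact Φ L hA y hlam hker)
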